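/- arXiv:1809.06067 — 2 statements merged into one kernel-verified Lean document; each statement's English description precedes it below -/
import Mathlib

section
/- For the scalar function s ↦ (e^{2st_f} − 1)/(2s) (extended by value t_f at s = 0), the map is strictly increasing in s for each fixed t_f > 0; hence for A symmetric with B = I, λ_max(G(t_f)) = (e^{2λ_n t_f}−1)/(2λ_n) and λ_min(G(t_f)) = (e^{2λ₁ t_f}−1)/(2λ₁) where λ₁ ≤ λ_n are the smallest and largest eigenvalues of A. -/
open Matrix Filter Topology

noncomputable def gram {n m : ℕ} (A : Matrix (Fin n) (Fin n) ℝ) (B : Matrix (Fin n) (Fin m) ℝ)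
    (tf : ℝ) : Matrix (Fin n) (Fin n) ℝ :=
  fun i j => ∫ t in (0:ℝ)..tf,
    (NormedSpace.exp (t • A) * B * Bᵀ * NormedSpace.exp (t • Aᵀ)) i j

/-- `φ(s) = (e^{2 s t_f} − 1)/(2s)`, extended by `t_f` at `s = 0`. -/
noncomputable def phi (tf s : ℝ) : ℝ :=
  if s = 0 then tf else (Real.exp (2 * s * tf) - 1) / (2 * s)

/-!
Since `φ(s) = ∫₀^{t_f} e^{2st} dt` and the integrand is strictly increasing in `s` for `t > 0`,
`φ` is strictly increasing. For symmetric `A`, `e^{tA} e^{tAᵀ} = e^{2tA}`, so integrating the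
spectral decomposition gives `G(t_f) = φ(A)` in the continuous functional calculus. By spectral
mapping the spectrum of `G(t_f)` is `φ(spec A)`, and a monotone map sends the maximum and
minimum of the finite set `spec A` to those of its image.
-/

theorem integral_exp_mul_left {c : ℝ} (hc : c ≠ 0) (b : ℝ) :
    ∫ t in (0 : ℝ)..b, Real.exp (c * t) = (Real.exp (c * b) - 1) / c := by
  rw [intervalIntegral.integral_comp_mul_left (fun t => Real.exp t) hc, integral_exp]
  simp [div_eq_inv_mul]

theorem phi_eq_integral (tf s : ℝ) : phi tf s = ∫ t in (0 : ℝ)..tf, Real.exp (2 * s * t) := by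
  rcases eq_or_ne s 0 with rfl | hs
  · simp [phi]
  · rw [phi, if_neg hs, integral_exp_mul_left (by positivity)]

theorem phi_strictMono {tf : ℝ} (htf : 0 < tf) : StrictMono (phi tf) := by
  intro a b hab
  have hcont : ∀ s : ℝ, ContinuousOn (fun t => Real.exp (2 * s * t)) (Set.Icc 0 tf) :=
    fun s => by fun_prop
  rw [phi_eq_integral, phi_eq_integral]
  refine intervalIntegral.integral_lt_integral_of_continuousOn_of_le_of_exists_lt htf
    (hcont a) (hcont b) (fun t ht => ?_) ⟨tf, Set.right_mem_Icc.2 htf.le, ?_⟩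
  · exact Real.exp_le_exp.2 (by nlinarith [ht.1])
  · exact Real.exp_lt_exp.2 (by nlinarith)

namespace Matrix.IsHermitian

variable {n : Type*} [Fintype n] [DecidableEq n] {A : Matrix n n ℝ}

theorem exp_smul_eq_cfc (hA : A.IsHermitian) (c : ℝ) :
    NormedSpace.exp (c • A) = cfc (fun x => Real.exp (c * x)) A := by
  open scoped Matrix.Norms.L2Operator in
  rw [← CFC.real_exp_eq_normedSpace_exp ((IsSelfAdjoint.all c).smul hA.isSelfAdjoint),
    cfc_comp_const_mul c Real.exp A]

theorem cfc_apply_eq_sum (hA : A.IsHermitian) (f : ℝ → ℝ) (i j : n) :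
    cfc f A i j = ∑ k, (hA.eigenvectorUnitary : Matrix n n ℝ) i k * f (hA.eigenvalues k) *
      (hA.eigenvectorUnitary : Matrix n n ℝ) j k := by
  rw [hA.cfc_eq, IsHermitian.cfc, Unitary.conjStarAlgAut_apply, mul_apply]
  simp [mul_diagonal]

theorem intervalIntegral_cfc_apply (hA : A.IsHermitian) {f : ℝ → ℝ → ℝ} {a b : ℝ}
    (hf : ∀ x, IntervalIntegrable (f · x) MeasureTheory.volume a b) (i j : n) :
    ∫ t in a..b, cfc (f t) A i j = cfc (fun x => ∫ t in a..b, f t x) A i j := by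
  simp only [hA.cfc_apply_eq_sum]
  rw [intervalIntegral.integral_finsetSum fun k _ => ((hf _).const_mul _).mul_const _]
  simp only [intervalIntegral.integral_mul_const, intervalIntegral.integral_const_mul]

end Matrix.IsHermitian

theorem gram_one_eq_cfc {n : ℕ} {A : Matrix (Fin n) (Fin n) ℝ} (hA : A.IsHermitian) (tf : ℝ) :
    gram A (1 : Matrix (Fin n) (Fin n) ℝ) tf = cfc (phi tf) A := by
  have hAt : Aᵀ = A := by
    rw [← conjTranspose_eq_transpose_of_trivial, hA.eq]
  have hexp : ∀ t : ℝ, NormedSpace.exp (t • A) * NormedSpace.exp (t • Aᵀ) =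
      cfc (fun x => Real.exp (2 * x * t)) A := fun t => by
    rw [hAt, ← Matrix.exp_add_of_commute _ _ (Commute.refl _), ← add_smul, hA.exp_smul_eq_cfc]
    congr 1 with x
    ring_nf
  rw [funext (phi_eq_integral tf)]
  ext i j
  simp only [_root_.gram, transpose_one, mul_one, hexp]
  exact hA.intervalIntegral_cfc_apply
    (fun x => (by fun_prop : Continuous _).intervalIntegrable _ _) i j

theorem phi_strictMono_and_extreme_eigs {n : ℕ} [NeZero n] (tf : ℝ) (htf : 0 < tf)
    (A : Matrix (Fin n) (Fin n) ℝ) (hA : A.IsHermitian) :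
    StrictMono (phi tf) ∧
      sSup (spectrum ℝ (gram A (1 : Matrix (Fin n) (Fin n) ℝ) tf)) =
        phi tf (sSup (spectrum ℝ A)) ∧
      sInf (spectrum ℝ (gram A (1 : Matrix (Fin n) (Fin n) ℝ) tf)) =
        phi tf (sInf (spectrum ℝ A)) := by
  have hmono := (phi_strictMono htf).monotone
  have hfin := A.finite_real_spectrum
  have hne : (spectrum ℝ A).Nonempty :=
    hA.spectrum_real_eq_range_eigenvalues ▸ Set.range_nonempty _
  have hspec :
      spectrum ℝ (gram A (1 : Matrix (Fin n) (Fin n) ℝ) tf) = phi tf '' spectrum ℝ A := by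
    rw [gram_one_eq_cfc hA, cfc_map_spectrum (phi tf) A hA.isSelfAdjoint (hfin.continuousOn _)]
  rw [hspec, ← hfin.map_sSup_of_monotone hmono hne, ← hfin.map_sInf_of_monotone hmono hne]
  exact ⟨phi_strictMono htf, rfl, rfl⟩
end

section
/- For any n×n real symmetric matrix M with n ≥ 2, the largest eigenvalue satisfies λ_max(M) ≤ √(α/n + √((n−1)/n · (β − α²/n))), where α = trace(M²) and β = trace(M⁴). -/
/-!
Writing λᵢ for the eigenvalues, trace(M²) and trace(M⁴) are the first two power sums of the
numbers xᵢ = λᵢ². Samuelson's inequality bounds each xᵢ by its mean plus √((n-1)/n) times the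
root of the sum of squared deviations, and λ_max ≤ √(λ_max²) finishes the argument.
-/

open Matrix Finset

theorem Matrix.IsHermitian.trace_pow_eq_sum_eigenvalues_pow {𝕜 : Type*} [RCLike 𝕜] {n : Type*}
    [Fintype n] [DecidableEq n] {A : Matrix n n 𝕜} (hA : A.IsHermitian) (k : ℕ) :
    (A ^ k).trace = ∑ i, ((hA.eigenvalues i ^ k : ℝ) : 𝕜) := by
  conv_lhs => rw [hA.spectral_theorem, ← map_pow, Unitary.conjStarAlgAut_apply, trace_mul_cycle,
    Unitary.coe_star_mul_self, one_mul, diagonal_pow, trace_diagonal]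
  simp

theorem card_mul_sq_le_of_sum_eq_zero {ι : Type*} [Fintype ι] {y : ι → ℝ}
    (hy : ∑ i, y i = 0) (j : ι) :
    Fintype.card ι * y j ^ 2 ≤ (Fintype.card ι - 1) * ∑ i, y i ^ 2 := by
  classical
  have hrest : ∑ i ∈ univ.erase j, y i = -y j := by
    rw [sum_erase_eq_sub (mem_univ j), hy, zero_sub]
  -- Cauchy–Schwarz on the other N - 1 terms, whose sum is -y j.
  have hcs := sq_sum_le_card_mul_sum_sq (s := univ.erase j) (f := y)
  rw [hrest, neg_sq, sum_erase_eq_sub (mem_univ j), card_erase_of_mem (mem_univ j), card_univ,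
    Nat.cast_pred (Fintype.card_pos_iff.2 ⟨j⟩)] at hcs
  linarith

theorem sum_sub_mean_sq {ι : Type*} [Fintype ι] (x : ι → ℝ) :
    ∑ i, (x i - (∑ k, x k) / Fintype.card ι) ^ 2 =
      ∑ i, x i ^ 2 - (∑ i, x i) ^ 2 / Fintype.card ι := by
  rcases isEmpty_or_nonempty ι with hι | hι
  · simp
  have hc : (Fintype.card ι : ℝ) ≠ 0 := by positivity
  simp only [sub_sq, sum_add_distrib, sum_sub_distrib, ← sum_mul, ← mul_sum, sum_const, card_univ,
    nsmul_eq_mul]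
  field_simp
  ring

theorem le_mean_add_sqrt {ι : Type*} [Fintype ι] (x : ι → ℝ) (j : ι) :
    x j ≤ (∑ i, x i) / Fintype.card ι + √((Fintype.card ι - 1) / Fintype.card ι *
      (∑ i, x i ^ 2 - (∑ i, x i) ^ 2 / Fintype.card ι)) := by
  set N : ℝ := (Fintype.card ι : ℝ)
  have hN : 0 < N := Nat.cast_pos.2 (Fintype.card_pos_iff.2 ⟨j⟩)
  set m := (∑ i, x i) / N
  have hcentered : ∑ i, (x i - m) = 0 := by
    rw [sum_sub_distrib, sum_const, card_univ, nsmul_eq_mul, mul_div_cancel₀ _ hN.ne', sub_self]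
  have hsq : (x j - m) ^ 2 ≤ (N - 1) / N * ∑ i, (x i - m) ^ 2 := by
    rw [div_mul_eq_mul_div, le_div_iff₀ hN, mul_comm]
    exact card_mul_sq_le_of_sum_eq_zero hcentered j
  rw [sum_sub_mean_sq] at hsq
  linarith [Real.le_sqrt_of_sq_le hsq]

theorem eig_max_upper_estimate_general {n : ℕ} (M : Matrix (Fin n) (Fin n) ℝ)
    (hM : M.IsHermitian) :
    sSup (spectrum ℝ M) ≤
      Real.sqrt ((M ^ 2).trace / n +
        Real.sqrt (((n : ℝ) - 1) / n * ((M ^ 4).trace - (M ^ 2).trace ^ 2 / n))) := by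
  refine Real.sSup_le ?_ (Real.sqrt_nonneg _)
  rw [hM.spectrum_real_eq_range_eigenvalues]
  rintro _ ⟨j, rfl⟩
  have h := le_mean_add_sqrt (fun i ↦ hM.eigenvalues i ^ 2) j
  simp only [← pow_mul, Fintype.card_fin] at h
  simp only [hM.trace_pow_eq_sum_eigenvalues_pow, RCLike.ofReal_real_eq_id, id]
  exact Real.le_sqrt_of_sq_le h

theorem eig_max_upper_estimate {n : ℕ} (hn : 2 ≤ n) (M : Matrix (Fin n) (Fin n) ℝ)
    (hM : M.IsHermitian) :
    sSup (spectrum ℝ M) ≤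
      Real.sqrt ((M ^ 2).trace / n +
        Real.sqrt (((n : ℝ) - 1) / n * ((M ^ 4).trace - (M ^ 2).trace ^ 2 / n))) :=
  eig_max_upper_estimate_general M hM
end
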